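/- arXiv:2112.05109 — 7 statements merged into one kernel-verified Lean document; each statement's English description precedes it below -/
import Mathlib

section
/- For δ ∈ (0, 1/2), let p_δ = 1 − 2δ. Define Σ_MBAR = 2p_δ/δ and, for an integer ν ≥ 1, Σ_TSS^ν = 4p_δ + 8p_δ^{ν+1}/(1 − p_δ^ν). Then Σ_TSS^ν ≤ Σ_MBAR if and only if ν ≥ 1 − log(1 + 2δ)/log(1 − 2δ); in particular, Σ_TSS^ν < Σ_MBAR for every ν ≥ 2 and every δ ∈ (0, 1/2). -/
noncomputable def sigmaMBAR (δ : ℝ) : ℝ := 2 * (1 - 2 * δ) / δ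

noncomputable def sigmaTSS (δ : ℝ) (ν : ℕ) : ℝ :=
  4 * (1 - 2 * δ) + 8 * (1 - 2 * δ) ^ (ν + 1) / (1 - (1 - 2 * δ) ^ ν)

theorem tss_beats_mbar (δ : ℝ) (hδ : δ ∈ Set.Ioo (0 : ℝ) (1 / 2)) :
    (∀ ν : ℕ, 1 ≤ ν →
      (sigmaTSS δ ν ≤ sigmaMBAR δ ↔
        (ν : ℝ) ≥ 1 - Real.log (1 + 2 * δ) / Real.log (1 - 2 * δ))) ∧
    (∀ ν : ℕ, 2 ≤ ν → sigmaTSS δ ν < sigmaMBAR δ) := by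
  obtain ⟨hδ0, hδ2⟩ := hδ
  set p : ℝ := 1 - 2 * δ with hp
  have hp0 : 0 < p := by simp only [hp]; linarith
  have hp1 : p < 1 := by simp only [hp]; linarith
  have h2p : (0:ℝ) < 2 - p := by linarith
  have hlogp : Real.log p < 0 := Real.log_neg hp0 hp1
  have key : ∀ m : ℕ, sigmaMBAR δ - sigmaTSS δ (m+1)
      = 4 * p^2 * (1 - p^m * (2 - p)) / ((1 - p) * (1 - p^(m+1))) := by
    intro m
    have hpm : p^(m+1) < 1 := pow_lt_one₀ hp0.le hp1 (by omega)
    have hD1 : (1:ℝ) - p ≠ 0 := by linarith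
    have hD2 : (1:ℝ) - p^(m+1) ≠ 0 := by linarith
    have hδne : δ ≠ 0 := ne_of_gt hδ0
    simp only [sigmaMBAR, sigmaTSS, ← hp]
    field_simp
    ring
  have hiff : ∀ m : ℕ, (sigmaTSS δ (m+1) ≤ sigmaMBAR δ ↔ p^m * (2 - p) ≤ 1) := by
    intro m
    have hpm : p^(m+1) < 1 := pow_lt_one₀ hp0.le hp1 (by omega)
    have hD : 0 < (1 - p) * (1 - p^(m+1)) := mul_pos (by linarith) (by linarith)
    rw [← sub_nonneg, key m, le_div_iff₀ hD, zero_mul]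
    constructor
    · intro h; nlinarith [pow_pos hp0 2]
    · intro h; nlinarith [pow_pos hp0 2]
  constructor
  · intro ν hν
    obtain ⟨m, rfl⟩ : ∃ m, ν = m + 1 := ⟨ν - 1, by omega⟩
    rw [hiff m]
    have hchain : p^m * (2 - p) ≤ 1 ↔ -Real.log (2 - p) / Real.log p ≤ (m:ℝ) := by
      rw [← le_div_iff₀ h2p, show (1:ℝ)/(2-p) = (2-p)⁻¹ by rw [one_div],
        ← Real.log_le_log_iff (pow_pos hp0 m) (inv_pos.mpr h2p),
        Real.log_pow, Real.log_inv, div_le_iff_of_neg hlogp]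
    rw [hchain, show (1:ℝ) + 2*δ = 2 - p by simp only [hp]; ring, neg_div]
    push_cast
    constructor <;> intro h <;> linarith
  · intro ν hν
    obtain ⟨m, rfl⟩ : ∃ m, ν = m + 1 := ⟨ν - 1, by omega⟩
    have hm : 1 ≤ m := by omega
    have hpm1 : p^(m+1) < 1 := pow_lt_one₀ hp0.le hp1 (by omega)
    have hD : 0 < (1 - p) * (1 - p^(m+1)) := mul_pos (by linarith) (by linarith)
    rw [← sub_pos, key m, lt_div_iff₀ hD, zero_mul]
    have h1 : p^m ≤ p^1 := pow_le_pow_of_le_one hp0.le hp1.le hm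
    have h2 : p^m * (2 - p) ≤ p * (2 - p) := by
      apply mul_le_mul_of_nonneg_right _ h2p.le
      simpa using h1
    have h3 : p^m * (2 - p) < 1 := by
      nlinarith [mul_pos (show (0:ℝ) < 1 - p by linarith) (show (0:ℝ) < 1 - p by linarith)]
    have h4 : (0:ℝ) < 4 * p^2 := by positivity
    nlinarith [mul_pos h4 (show (0:ℝ) < 1 - p^m * (2 - p) by linarith)]
end

section
/- For δ ∈ (0, 1/2) and p_δ = 1 − 2δ, as δ → 0 one has Σ_MBAR = 2p_δ/δ → ∞ (it is Θ(δ^{−1})), while for each fixed δ, Σ_TSS^ν = 4p_δ + 8p_δ^{ν+1}/(1 − p_δ^ν) → 4p_δ as ν → ∞; in particular for every δ there exists N such that Σ_TSS^N ≤ 4p_δ + 1 = O(1). -/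
open Filter Topology

lemma sigmaMBAR_eq {δ : ℝ} (hδ : δ ≠ 0) : sigmaMBAR δ = 2 * δ⁻¹ - 4 := by
  rw [sigmaMBAR]
  field_simp
  ring

lemma tendsto_sigmaMBAR_nhdsGT_zero : Tendsto sigmaMBAR (𝓝[>] 0) atTop := by
  have h : Tendsto (fun δ : ℝ => 2 * δ⁻¹ - 4) (𝓝[>] 0) atTop :=
    tendsto_atTop_add_const_right _ _ (tendsto_inv_nhdsGT_zero.const_mul_atTop two_pos)
  refine h.congr' ?_
  filter_upwards [self_mem_nhdsWithin] with δ hδ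
  exact (sigmaMBAR_eq (ne_of_gt hδ)).symm

lemma tendsto_pow_succ_div_one_sub_pow {r : ℝ} (hr : |r| < 1) :
    Tendsto (fun ν : ℕ => r ^ (ν + 1) / (1 - r ^ ν)) atTop (𝓝 0) := by
  have hpow : Tendsto (fun ν : ℕ => r ^ ν) atTop (𝓝 0) :=
    tendsto_pow_atTop_nhds_zero_of_abs_lt_one hr
  have hnum : Tendsto (fun ν : ℕ => r ^ (ν + 1)) atTop (𝓝 0) :=
    hpow.comp (tendsto_add_atTop_nat 1)
  have hden : Tendsto (fun ν : ℕ => 1 - r ^ ν) atTop (𝓝 1) := by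
    simpa using tendsto_const_nhds.sub hpow
  rw [← zero_div (1 : ℝ)]
  exact hnum.div hden one_ne_zero

lemma tendsto_sigmaTSS {δ : ℝ} (hδ : δ ∈ Set.Ioo (0 : ℝ) 1) :
    Tendsto (sigmaTSS δ) atTop (𝓝 (4 * (1 - 2 * δ))) := by
  have hr : |1 - 2 * δ| < 1 := abs_lt.2 ⟨by linarith [hδ.2], by linarith [hδ.1]⟩
  have h := (tendsto_const_nhds (x := 4 * (1 - 2 * δ))).add
    ((tendsto_pow_succ_div_one_sub_pow hr).const_mul 8)
  rw [mul_zero, add_zero] at h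
  exact h.congr fun ν => by rw [sigmaTSS, mul_div_assoc]

theorem tss_variance_bounded_as_overlap_vanishes :
    Filter.Tendsto sigmaMBAR (nhdsWithin 0 (Set.Ioo (0 : ℝ) (1 / 2))) Filter.atTop ∧
    (∀ δ ∈ Set.Ioo (0 : ℝ) (1 / 2),
      Filter.Tendsto (fun ν : ℕ => sigmaTSS δ ν) Filter.atTop
        (nhds (4 * (1 - 2 * δ)))) ∧
    (∀ δ ∈ Set.Ioo (0 : ℝ) (1 / 2),
      ∃ N : ℕ, sigmaTSS δ N ≤ 4 * (1 - 2 * δ) + 1) := by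
  have hIoo : Set.Ioo (0 : ℝ) (1 / 2) ⊆ Set.Ioo 0 1 := Set.Ioo_subset_Ioo_right (by norm_num)
  refine ⟨tendsto_sigmaMBAR_nhdsGT_zero.mono_left (nhdsWithin_mono 0 fun δ hδ => hδ.1),
    fun δ hδ => tendsto_sigmaTSS (hIoo hδ), fun δ hδ => ?_⟩
  obtain ⟨N, hN⟩ := ((tendsto_sigmaTSS (hIoo hδ)).eventually_lt_const
    (lt_add_one (4 * (1 - 2 * δ)))).exists
  exact ⟨N, hN.le⟩
end

section
/- Let π be a probability vector on {1,...,K} with all π_k > 0, Π = diag(π), and let O be a symmetric positive semidefinite K×K matrix such that B = I − Π^{1/2}OΠ^{1/2} is positive semidefinite with one-dimensional kernel spanned by Π^{1/2}𝟙. Set A = Π − ΠOΠ, Σ_MBAR = A⁺ − Π^{−1} (A⁺ the Moore–Penrose pseudoinverse), and Σ_TSS = O. Then for every pair i, j, (e_j − e_i)ᵀ (Σ_MBAR − Σ_TSS) (e_j − e_i) ≥ 0. -/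
/-!
Write `D = Π`, `S = Π^{1/2}` and `A = D - D O D`. Then `A = S B S`, so `A` is positive semidefinite,
and its kernel is spanned by `𝟙` because that of `B` is spanned by `S 𝟙`. Hence `e_j - e_i ⊥ ker A`
lies in the range of `A`, where `A A⁺` acts as the identity, and the quadratic form of
`Σ = A⁺ - D⁻¹ - O` on it is that of `A Σ A = (D O) A (O D)`, which is positive semidefinite.
-/

open Matrix

/-- With `d = Π`, `e = Π⁻¹` and `m = A⁺`, this is `A (Σ_MBAR - Σ_TSS) A = (Π O) A (O Π)`. -/
theorem sandwich_sub_inv_sub_eq {R : Type*} [Ring R] {d o m e : R} (hde : d * e = 1)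
    (hm : (d - d * o * d) * m * (d - d * o * d) = d - d * o * d) :
    (d - d * o * d) * (m - e - o) * (d - d * o * d) = d * o * (d - d * o * d) * (o * d) := by
  have he : (d - d * o * d) * e = 1 - d * o := by
    rw [sub_mul, mul_assoc (d * o), hde, mul_one]
  calc (d - d * o * d) * (m - e - o) * (d - d * o * d)
      = (d - d * o * d) * m * (d - d * o * d) - (d - d * o * d) * e * (d - d * o * d)
          - (d - d * o * d) * o * (d - d * o * d) := by noncomm_ring
    _ = d * o * (d - d * o * d) * (o * d) := by rw [hm, he]; noncomm_ring

namespace Matrix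

variable {n R : Type*} [Fintype n]

/-- `A A'` is the orthogonal projection onto `range A = (ker Aᵀ)ᗮ`. -/
theorem mulVec_mulVec_eq_self_of_orthogonal_ker_transpose [CommRing R] [LinearOrder R]
    [IsStrictOrderedRing R] {A A' : Matrix n n R} (h₁ : A * A' * A = A)
    (h₃ : (A * A')ᵀ = A * A') {v : n → R} (hv : ∀ w, Aᵀ *ᵥ w = 0 → w ⬝ᵥ v = 0) :
    A *ᵥ (A' *ᵥ v) = v := by
  set w := v - (A * A') *ᵥ v
  have hAw : Aᵀ *ᵥ w = 0 := by
    have : Aᵀ * (A * A') = Aᵀ := by conv_rhs => rw [← h₁, transpose_mul, h₃]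
    rw [mulVec_sub, mulVec_mulVec, this, sub_self]
  have hPw : (A * A') *ᵥ w = 0 := by
    rw [← h₃, transpose_mul, ← mulVec_mulVec, hAw, mulVec_zero]
  have hww : w ⬝ᵥ w = 0 := by
    calc w ⬝ᵥ w = w ⬝ᵥ v - w ⬝ᵥ ((A * A') *ᵥ v) := dotProduct_sub w _ _
      _ = 0 := by rw [hv w hAw, dotProduct_mulVec, ← mulVec_transpose, h₃, hPw, zero_dotProduct,
        sub_zero]
  rw [mulVec_mulVec, eq_comm, ← sub_eq_zero]
  exact dotProduct_self_eq_zero.mp hww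

theorem exists_eq_smul_one_of_diagonal_mul_mul_diagonal_mulVec_eq_zero [DecidableEq n]
    [Field R] {s : n → R} (hs : ∀ k, s k ≠ 0) {B : Matrix n n R}
    (hB : ∀ v, B *ᵥ v = 0 → ∃ c : R, v = c • s) {w : n → R}
    (hw : (diagonal s * B * diagonal s) *ᵥ w = 0) : ∃ c : R, w = c • 1 := by
  have hBsw : B *ᵥ (diagonal s *ᵥ w) = 0 := by
    ext k
    have := congrFun hw k
    rw [← mulVec_mulVec, ← mulVec_mulVec, mulVec_diagonal] at this
    exact (mul_eq_zero.mp this).resolve_left (hs k)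
  obtain ⟨c, hc⟩ := hB _ hBsw
  refine ⟨c, funext fun k => mul_left_cancel₀ (hs k) ?_⟩
  simpa [mulVec_diagonal, mul_comm] using congrFun hc k

theorem dotProduct_mulVec_nonneg_of_posSemidef_transpose_mul_mul [CommRing R] [PartialOrder R]
    [StarRing R] [TrivialStar R] {A M : Matrix n n R} (h : (Aᵀ * M * A).PosSemidef) (u : n → R) :
    0 ≤ (A *ᵥ u) ⬝ᵥ (M *ᵥ (A *ᵥ u)) := by
  have := h.dotProduct_mulVec_nonneg u
  rwa [star_trivial, ← mulVec_mulVec, ← mulVec_mulVec, dotProduct_mulVec, vecMul_transpose] at this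

end Matrix

theorem tss_variance_le_mbar_general (K : ℕ)
    (π : Fin K → ℝ) (hπ : ∀ k, 0 < π k)
    (O : Matrix (Fin K) (Fin K) ℝ) (hOsymm : O.IsSymm)
    (hBPSD : ((1 : Matrix (Fin K) (Fin K) ℝ) -
      Matrix.diagonal (fun i => Real.sqrt (π i)) * O *
        Matrix.diagonal (fun i => Real.sqrt (π i))).PosSemidef)
    (hBker : ∀ v : Fin K → ℝ,
      ((1 : Matrix (Fin K) (Fin K) ℝ) -
        Matrix.diagonal (fun i => Real.sqrt (π i)) * O *
          Matrix.diagonal (fun i => Real.sqrt (π i))).mulVec v = 0 ↔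
      ∃ c : ℝ, v = c • (fun i => Real.sqrt (π i)))
    (Aplus : Matrix (Fin K) (Fin K) ℝ)
    (hMP1 : (Matrix.diagonal π - Matrix.diagonal π * O * Matrix.diagonal π) * Aplus *
      (Matrix.diagonal π - Matrix.diagonal π * O * Matrix.diagonal π) =
      Matrix.diagonal π - Matrix.diagonal π * O * Matrix.diagonal π)
    (hMP3 : ((Matrix.diagonal π - Matrix.diagonal π * O * Matrix.diagonal π) * Aplus)ᵀ =
      (Matrix.diagonal π - Matrix.diagonal π * O * Matrix.diagonal π) * Aplus) :
    ∀ i j : Fin K,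
      0 ≤ (Pi.single j 1 - Pi.single i 1) ⬝ᵥ
        ((Aplus - (Matrix.diagonal π)⁻¹ - O).mulVec (Pi.single j 1 - Pi.single i 1)) := by
  intro i j
  set D := diagonal π
  set S := diagonal fun k => √(π k)
  have hSS : S * S = D := by
    rw [diagonal_mul_diagonal]
    exact congrArg diagonal (funext fun k => Real.mul_self_sqrt (hπ k).le)
  have hA : D - D * O * D = S * (1 - S * O * S) * S := by
    rw [← hSS]; simp only [mul_sub, sub_mul, mul_one, mul_assoc]
  have hApsd : (D - D * O * D).PosSemidef := by
    rw [hA]; simpa [S] using hBPSD.conjTranspose_mul_mul_same S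
  have hAt : (D - D * O * D)ᵀ = D - D * O * D := by
    simpa [conjTranspose_eq_transpose_of_trivial] using hApsd.1.eq
  set v : Fin K → ℝ := Pi.single j 1 - Pi.single i 1
  have hv : (D - D * O * D) *ᵥ (Aplus *ᵥ v) = v := by
    refine mulVec_mulVec_eq_self_of_orthogonal_ker_transpose hMP1 hMP3 fun w hw => ?_
    rw [hAt, hA] at hw
    obtain ⟨c, rfl⟩ := exists_eq_smul_one_of_diagonal_mul_mul_diagonal_mulVec_eq_zero
      (fun k => (Real.sqrt_pos.2 (hπ k)).ne') (fun v => (hBker v).1) hw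
    simp [v]
  have hD : D * D⁻¹ = 1 :=
    mul_nonsing_inv D (by simp [D, det_diagonal, Finset.prod_ne_zero_iff, (hπ _).ne'])
  have hOD : (O * D)ᴴ = D * O := by
    simp [conjTranspose_eq_transpose_of_trivial, transpose_mul, hOsymm.eq, D]
  have hsandwich : ((D - D * O * D)ᵀ * (Aplus - D⁻¹ - O) * (D - D * O * D)).PosSemidef := by
    rw [hAt, sandwich_sub_inv_sub_eq hD hMP1]
    simpa only [hOD] using hApsd.conjTranspose_mul_mul_same (O * D)
  rw [← hv]
  exact dotProduct_mulVec_nonneg_of_posSemidef_transpose_mul_mul hsandwich _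

theorem tss_variance_le_mbar (K : ℕ) (hK : 1 ≤ K)
    (π : Fin K → ℝ) (hπsum : ∑ k, π k = 1) (hπ : ∀ k, 0 < π k)
    (O : Matrix (Fin K) (Fin K) ℝ) (hOsymm : O.IsSymm) (hOPSD : O.PosSemidef)
    (hBPSD : ((1 : Matrix (Fin K) (Fin K) ℝ) -
      Matrix.diagonal (fun i => Real.sqrt (π i)) * O *
        Matrix.diagonal (fun i => Real.sqrt (π i))).PosSemidef)
    (hBker : ∀ v : Fin K → ℝ,
      ((1 : Matrix (Fin K) (Fin K) ℝ) -
        Matrix.diagonal (fun i => Real.sqrt (π i)) * O *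
          Matrix.diagonal (fun i => Real.sqrt (π i))).mulVec v = 0 ↔
      ∃ c : ℝ, v = c • (fun i => Real.sqrt (π i)))
    (Aplus : Matrix (Fin K) (Fin K) ℝ)
    (hMP1 : (Matrix.diagonal π - Matrix.diagonal π * O * Matrix.diagonal π) * Aplus *
      (Matrix.diagonal π - Matrix.diagonal π * O * Matrix.diagonal π) =
      Matrix.diagonal π - Matrix.diagonal π * O * Matrix.diagonal π)
    (hMP2 : Aplus * (Matrix.diagonal π - Matrix.diagonal π * O * Matrix.diagonal π) * Aplus =
      Aplus)
    (hMP3 : ((Matrix.diagonal π - Matrix.diagonal π * O * Matrix.diagonal π) * Aplus)ᵀ =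
      (Matrix.diagonal π - Matrix.diagonal π * O * Matrix.diagonal π) * Aplus)
    (hMP4 : (Aplus * (Matrix.diagonal π - Matrix.diagonal π * O * Matrix.diagonal π))ᵀ =
      Aplus * (Matrix.diagonal π - Matrix.diagonal π * O * Matrix.diagonal π)) :
    ∀ i j : Fin K,
      0 ≤ (Pi.single j 1 - Pi.single i 1) ⬝ᵥ
        ((Aplus - (Matrix.diagonal π)⁻¹ - O).mulVec (Pi.single j 1 - Pi.single i 1)) :=
  tss_variance_le_mbar_general K π hπ O hOsymm hBPSD hBker Aplus hMP1 hMP3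
end

section
/- For K = 2 with Π = diag(π₁, π₂), π₁ + π₂ = 1, π_k > 0, and overlap matrix O satisfying Oπ = 𝟙 with off-diagonal entry O₁₂ ∈ (0, 1], the MBAR asymptotic variance of F₂ − F₁, namely (e₂ − e₁)ᵀ((Π − ΠOΠ)⁺ − Π^{−1})(e₂ − e₁), equals (1/(π₁π₂))·(O₁₂^{−1} − 1). -/
/-!
Since `Oπ = 𝟙`, the matrix `M = Π - ΠOΠ` is symmetric with zero row sums, so for two states it is
the rank-one matrix `c • v vᵀ` with `v = e₂ - e₁` and `c = -M₁₂ = π₁π₂O₁₂`. Any `A` with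
`M A M = M` then satisfies `c² (vᵀAv) v vᵀ = c v vᵀ`, i.e. `vᵀAv = 1/c`, while
`vᵀΠ⁻¹v = 1/π₁ + 1/π₂ = 1/(π₁π₂)` because `π₁ + π₂ = 1`.
-/

open Finset Matrix

namespace Matrix

variable {n : Type*} [Fintype n]

theorem inv_diagonal_of_ne_zero [DecidableEq n] {K : Type*} [Field K] {d : n → K}
    (hd : ∀ i, d i ≠ 0) : (diagonal d)⁻¹ = diagonal d⁻¹ := by
  refine inv_eq_left_inv ?_
  rw [diagonal_mul_diagonal, ← diagonal_one]
  exact congrArg diagonal (funext fun i => inv_mul_cancel₀ (hd i))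

theorem dotProduct_mulVec_eq_inv_of_smul_vecMulVec_mul_mul {K : Type*} [Field K] {c : K}
    {v : n → K} {A : Matrix n n K} (hc : c ≠ 0) (hv : v ≠ 0)
    (hA : c • vecMulVec v v * A * (c • vecMulVec v v) = c • vecMulVec v v) :
    v ⬝ᵥ A *ᵥ v = c⁻¹ := by
  rw [Matrix.smul_mul, Matrix.mul_smul, Matrix.smul_mul, smul_smul, Matrix.mul_assoc,
    mul_vecMulVec, vecMulVec_mul_vecMulVec, vecMulVec_smul, smul_smul] at hA
  have hscalar : c * c * (v ⬝ᵥ A *ᵥ v) = c :=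
    smul_left_injective K (vecMulVec_ne_zero hv hv) hA
  refine (inv_eq_of_mul_eq_one_right (mul_left_cancel₀ hc ?_)).symm
  linear_combination hscalar

theorem eq_smul_vecMulVec_of_isSymm_of_mulVec_one_eq_zero {R : Type*} [CommRing R]
    {M : Matrix (Fin 2) (Fin 2) R} (hM : M.IsSymm) (hrows : M *ᵥ 1 = 0) :
    M = (-M 0 1) • vecMulVec (Pi.single 1 1 - Pi.single 0 1) (Pi.single 1 1 - Pi.single 0 1) := by
  have hrow0 : M 0 0 + M 0 1 = 0 := by simpa [mulVec, dotProduct] using congrFun hrows 0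
  have hrow1 : M 1 0 + M 1 1 = 0 := by simpa [mulVec, dotProduct] using congrFun hrows 1
  have hsymm : M 1 0 = M 0 1 := hM.apply 0 1
  ext i j
  fin_cases i <;> fin_cases j <;>
    simp only [Fin.zero_eta, Fin.mk_one, smul_apply, vecMulVec_apply, Pi.sub_apply, ne_eq,
      zero_ne_one, one_ne_zero, not_false_eq_true, Pi.single_eq_of_ne, Pi.single_eq_same, sub_zero,
      zero_sub, mul_neg, mul_one, neg_neg, smul_eq_mul] <;> grind

variable [DecidableEq n] {R : Type*} [CommRing R] (π : n → R) (O : Matrix n n R)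

theorem isSymm_diagonal_sub_diagonal_mul_mul_diagonal (hO : O.IsSymm) :
    (diagonal π - diagonal π * O * diagonal π).IsSymm := by
  simp only [IsSymm, transpose_sub, transpose_mul, diagonal_transpose, hO.eq, Matrix.mul_assoc]

theorem diagonal_sub_diagonal_mul_mul_diagonal_mulVec_one (hO : O *ᵥ π = 1) :
    (diagonal π - diagonal π * O * diagonal π) *ᵥ 1 = 0 := by
  have hdiag : diagonal π *ᵥ 1 = π :=
    funext fun i => by rw [mulVec_diagonal, Pi.one_apply, mul_one]
  rw [sub_mulVec, ← mulVec_mulVec, hdiag, ← mulVec_mulVec, hO, hdiag, sub_self]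

theorem diagonal_sub_diagonal_mul_mul_diagonal_apply_of_ne {i j : n} (hij : i ≠ j) :
    (diagonal π - diagonal π * O * diagonal π) i j = -(π i * π j * O i j) := by
  simp only [sub_apply, diagonal_mul, mul_diagonal, diagonal_apply_ne _ hij, zero_sub, neg_inj]
  ring

end Matrix

theorem bar_variance_two_states_general
    (π : Fin 2 → ℝ) (hπsum : ∑ k, π k = 1) (hπ : ∀ k, 0 < π k)
    (O : Matrix (Fin 2) (Fin 2) ℝ) (hOsymm : O.IsSymm)
    (hOnorm : O.mulVec π = fun _ => 1)
    (hO12 : O 0 1 ∈ Set.Ioc (0 : ℝ) 1)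
    (Aplus : Matrix (Fin 2) (Fin 2) ℝ)
    (hMP1 : (Matrix.diagonal π - Matrix.diagonal π * O * Matrix.diagonal π) * Aplus *
      (Matrix.diagonal π - Matrix.diagonal π * O * Matrix.diagonal π) =
      Matrix.diagonal π - Matrix.diagonal π * O * Matrix.diagonal π) :
    (Pi.single 1 1 - Pi.single 0 1) ⬝ᵥ
      ((Aplus - (Matrix.diagonal π)⁻¹).mulVec (Pi.single 1 1 - Pi.single 0 1)) =
    (1 / (π 0 * π 1)) * ((O 0 1)⁻¹ - 1) := by
  set v : Fin 2 → ℝ := Pi.single 1 1 - Pi.single 0 1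
  have hπ0 := (hπ 0).ne'
  have hπ1 := (hπ 1).ne'
  have hO01 := hO12.1.ne'
  have hM : diagonal π - diagonal π * O * diagonal π = (π 0 * π 1 * O 0 1) • vecMulVec v v := by
    rw [eq_smul_vecMulVec_of_isSymm_of_mulVec_one_eq_zero
      (isSymm_diagonal_sub_diagonal_mul_mul_diagonal π O hOsymm)
      (diagonal_sub_diagonal_mul_mul_diagonal_mulVec_one π O hOnorm),
      diagonal_sub_diagonal_mul_mul_diagonal_apply_of_ne π O zero_ne_one, neg_neg]
  have hv : v ≠ 0 := fun h => by simpa [v] using congrFun h 1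
  have hAplus : v ⬝ᵥ Aplus *ᵥ v = (π 0 * π 1 * O 0 1)⁻¹ :=
    dotProduct_mulVec_eq_inv_of_smul_vecMulVec_mul_mul (mul_ne_zero (mul_ne_zero hπ0 hπ1) hO01) hv
      (hM ▸ hMP1)
  have hdiag : v ⬝ᵥ (diagonal π)⁻¹ *ᵥ v = (π 0)⁻¹ + (π 1)⁻¹ := by
    rw [inv_diagonal_of_ne_zero fun k => (hπ k).ne']
    simp [v, mulVec, dotProduct, Fin.sum_univ_two]
  rw [Fin.sum_univ_two] at hπsum
  rw [sub_mulVec, dotProduct_sub, hAplus, hdiag]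
  field_simp
  linear_combination -O 0 1 * hπsum

theorem bar_variance_two_states
    (π : Fin 2 → ℝ) (hπsum : ∑ k, π k = 1) (hπ : ∀ k, 0 < π k)
    (O : Matrix (Fin 2) (Fin 2) ℝ) (hOsymm : O.IsSymm)
    (hOnorm : O.mulVec π = fun _ => 1)
    (hO12 : O 0 1 ∈ Set.Ioc (0 : ℝ) 1)
    (Aplus : Matrix (Fin 2) (Fin 2) ℝ)
    (hMP1 : (Matrix.diagonal π - Matrix.diagonal π * O * Matrix.diagonal π) * Aplus *
      (Matrix.diagonal π - Matrix.diagonal π * O * Matrix.diagonal π) =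
      Matrix.diagonal π - Matrix.diagonal π * O * Matrix.diagonal π)
    (hMP2 : Aplus * (Matrix.diagonal π - Matrix.diagonal π * O * Matrix.diagonal π) * Aplus =
      Aplus)
    (hMP3 : ((Matrix.diagonal π - Matrix.diagonal π * O * Matrix.diagonal π) * Aplus)ᵀ =
      (Matrix.diagonal π - Matrix.diagonal π * O * Matrix.diagonal π) * Aplus)
    (hMP4 : (Aplus * (Matrix.diagonal π - Matrix.diagonal π * O * Matrix.diagonal π))ᵀ =
      Aplus * (Matrix.diagonal π - Matrix.diagonal π * O * Matrix.diagonal π)) :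
    (Pi.single 1 1 - Pi.single 0 1) ⬝ᵥ
      ((Aplus - (Matrix.diagonal π)⁻¹).mulVec (Pi.single 1 1 - Pi.single 0 1)) =
    (1 / (π 0 * π 1)) * ((O 0 1)⁻¹ - 1) :=
  bar_variance_two_states_general π hπsum hπ O hOsymm hOnorm hO12 Aplus hMP1
end

section
/- Let γ be a probability vector on {1,...,K} with all γ_k > 0, let η > 0, and for o ∈ ℝ^K with all o_k > 0 define π_k(o) = γ_k o_k^{−η} / Σ_ℓ γ_ℓ o_ℓ^{−η}. With E_γ[f(O)] := Σ_k γ_k f(o_k), the inequality 1 − E_γ[O] − E_γ[O^{1−η}]/E_γ[O^{−η}] + E_γ[O²] ≥ E_γ[(1−O)²] holds; consequently, for U(o) = (1/2)Σ_k γ_k (1 − o_k)², the vector field o'_k = π_k(o)/γ_k − o_k satisfies ⟨∇U(o), o'⟩ ≤ −2U(o), so 𝟙 is a globally asymptotically stable equilibrium. -/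
/-!
Since `o ↦ o` is increasing and `o ↦ o ^ (-η)` is decreasing, Chebyshev's correlation inequality
for the probability weights `γ` gives `E_γ[O ^ (1 - η)] ≤ E_γ[O] E_γ[O ^ (-η)]`, which is the first
inequality after expanding `E_γ[(1 - O)²]`. The drift `⟨∇U(o), o'⟩` is, for any probability vector
`π` in place of the tilt, exactly `-(1 - E_γ[O] - E_π[O] + E_γ[O²])`, and for the tilt
`E_π[O] = E_γ[O ^ (1 - η)] / E_γ[O ^ (-η)]`; so the second inequality is the first one negated.
-/

open Finset

theorem Antivary.weighted_card_mul_sum_le_sum_mul_sum {ι : Type*} [Fintype ι] {w f g : ι → ℝ}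
    (hw : ∀ i, 0 ≤ w i) (hfg : Antivary f g) :
    (∑ i, w i) * ∑ i, w i * (f i * g i) ≤ (∑ i, w i * f i) * ∑ i, w i * g i := by
  have hpairs : ∑ i, ∑ j, w i * w j * ((f j - f i) * (g j - g i)) ≤ 0 :=
    sum_nonpos fun i _ ↦ sum_nonpos fun j _ ↦
      mul_nonpos_of_nonneg_of_nonpos (mul_nonneg (hw i) (hw j)) (hfg.sub_mul_sub_nonpos i j)
  have hexpand : ∑ i, ∑ j, w i * w j * ((f j - f i) * (g j - g i)) =
      2 * ((∑ i, w i) * ∑ i, w i * (f i * g i) - (∑ i, w i * f i) * ∑ i, w i * g i) := by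
    have hterm : ∀ i j, w i * w j * ((f j - f i) * (g j - g i)) =
        w i * (w j * (f j * g j)) + w i * (f i * g i) * w j
          - w i * f i * (w j * g j) - w i * g i * (w j * f j) := fun i j ↦ by ring
    simp only [hterm, sum_add_distrib, sum_sub_distrib, ← mul_sum, ← sum_mul]
    ring
  linarith

theorem Real.antivary_rpow_neg {ι : Type*} {o : ι → ℝ} (ho : ∀ i, 0 < o i) {η : ℝ} (hη : 0 ≤ η) :
    Antivary o fun i ↦ o i ^ (-η) := by
  refine antivaryOn_univ.mp
    ((monovaryOn_self o _).comp_antitoneOn_right (g' := fun x : ℝ ↦ x ^ (-η)) ?_)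
  refine (Real.antitoneOn_rpow_Ioi_of_exponent_nonpos (neg_nonpos.mpr hη)).mono ?_
  rintro _ ⟨i, -, rfl⟩
  exact ho i

section ProbabilityWeights

variable {ι : Type*} [Fintype ι] {w : ι → ℝ}

theorem sum_mul_one_sub_sq (hw1 : ∑ i, w i = 1) (o : ι → ℝ) :
    ∑ i, w i * (1 - o i) ^ 2 = 1 - 2 * ∑ i, w i * o i + ∑ i, w i * o i ^ 2 := by
  have hterm : ∀ i, w i * (1 - o i) ^ 2 = w i - 2 * (w i * o i) + w i * o i ^ 2 := fun i ↦ by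
    ring
  simp only [hterm, sum_add_distrib, sum_sub_distrib, ← mul_sum, hw1]

theorem sum_neg_mul_one_sub_mul_div_sub (hw : ∀ i, w i ≠ 0) (hw1 : ∑ i, w i = 1)
    {p : ι → ℝ} (hp : ∑ i, p i = 1) (o : ι → ℝ) :
    ∑ i, -(w i * (1 - o i)) * (p i / w i - o i) =
      -∑ i, w i * (1 - o i) ^ 2 - (∑ i, w i * o i - ∑ i, p i * o i) := by
  have hterm : ∀ i, -(w i * (1 - o i)) * (p i / w i - o i) =
      p i * o i + w i * o i - w i * o i ^ 2 - p i := fun i ↦ by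
    field_simp [hw i]
    ring
  simp only [hterm, sum_sub_distrib, sum_add_distrib, hp, sum_mul_one_sub_sq hw1]
  ring

theorem sum_mul_rpow_one_sub_div_le (hw : ∀ i, 0 ≤ w i) (hw1 : ∑ i, w i = 1) {o : ι → ℝ}
    (ho : ∀ i, 0 < o i) {η : ℝ} (hη : 0 ≤ η) :
    (∑ i, w i * o i ^ (1 - η)) / (∑ i, w i * o i ^ (-η)) ≤ ∑ i, w i * o i := by
  have hcorr := (Real.antivary_rpow_neg ho hη).weighted_card_mul_sum_le_sum_mul_sum hw
  have hpow : ∀ i, o i ^ (1 - η) = o i * o i ^ (-η) := fun i ↦ by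
    rw [sub_eq_add_neg, Real.rpow_add (ho i), Real.rpow_one]
  simp only [hw1, one_mul, ← hpow] at hcorr
  exact div_le_of_le_mul₀ (sum_nonneg fun i _ ↦ mul_nonneg (hw i) (Real.rpow_nonneg (ho i).le _))
    (sum_nonneg fun i _ ↦ mul_nonneg (hw i) (ho i).le) hcorr

/-- The power-law tilt `π(o)` of the weights `w`. -/
noncomputable def tilt (w o : ι → ℝ) (η : ℝ) (i : ι) : ℝ :=
  w i * o i ^ (-η) / ∑ j, w j * o j ^ (-η)

theorem sum_tilt (hw : ∀ i, 0 < w i) (hw1 : ∑ i, w i = 1) {o : ι → ℝ} (ho : ∀ i, 0 < o i)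
    (η : ℝ) : ∑ i, tilt w o η i = 1 := by
  have hne : (univ : Finset ι).Nonempty := nonempty_of_sum_ne_zero (hw1 ▸ one_ne_zero)
  have hpos : 0 < ∑ j, w j * o j ^ (-η) :=
    sum_pos (fun j _ ↦ mul_pos (hw j) (Real.rpow_pos_of_pos (ho j) _)) hne
  simp only [tilt]
  rw [← sum_div, div_self hpos.ne']

theorem sum_tilt_mul {o : ι → ℝ} (ho : ∀ i, 0 < o i) (η : ℝ) :
    ∑ i, tilt w o η i * o i = (∑ i, w i * o i ^ (1 - η)) / ∑ i, w i * o i ^ (-η) := by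
  have hpow : ∀ i, o i ^ (1 - η) = o i ^ (-η) * o i := fun i ↦ by
    rw [sub_eq_neg_add, Real.rpow_add (ho i), Real.rpow_one]
  simp only [tilt, div_mul_eq_mul_div, ← sum_div, hpow, mul_assoc]

end ProbabilityWeights

theorem visit_control_tilt_lyapunov_general (K : ℕ)
    (γ : Fin K → ℝ) (hγsum : ∑ k, γ k = 1) (hγ : ∀ k, 0 < γ k)
    (η : ℝ) (hη : 0 < η)
    (o : Fin K → ℝ) (ho : ∀ k, 0 < o k) :
    (1 - (∑ k, γ k * o k) -
        (∑ k, γ k * o k ^ (1 - η)) / (∑ k, γ k * o k ^ (-η)) +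
        (∑ k, γ k * o k ^ (2 : ℕ)) ≥ ∑ k, γ k * (1 - o k) ^ 2) ∧
    (∑ k, (-(γ k * (1 - o k))) *
        ((γ k * o k ^ (-η) / ∑ l, γ l * o l ^ (-η)) / γ k - o k) ≤
      -2 * ((1 / 2) * ∑ k, γ k * (1 - o k) ^ 2)) := by
  have hcorr := sum_mul_rpow_one_sub_div_le (fun k ↦ (hγ k).le) hγsum ho hη.le
  have hsq := sum_mul_one_sub_sq hγsum o
  have hdrift : ∑ k, (-(γ k * (1 - o k))) * (tilt γ o η k / γ k - o k) =
      -∑ k, γ k * (1 - o k) ^ 2 - (∑ k, γ k * o k - ∑ k, tilt γ o η k * o k) :=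
    sum_neg_mul_one_sub_mul_div_sub (fun k ↦ (hγ k).ne') hγsum (sum_tilt hγ hγsum ho η) o
  rw [sum_tilt_mul ho] at hdrift
  exact ⟨by linarith, by unfold tilt at hdrift; linarith⟩

theorem visit_control_tilt_lyapunov (K : ℕ) (hK : 1 ≤ K)
    (γ : Fin K → ℝ) (hγsum : ∑ k, γ k = 1) (hγ : ∀ k, 0 < γ k)
    (η : ℝ) (hη : 0 < η)
    (o : Fin K → ℝ) (ho : ∀ k, 0 < o k) :
    (1 - (∑ k, γ k * o k) -
        (∑ k, γ k * o k ^ (1 - η)) / (∑ k, γ k * o k ^ (-η)) +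
        (∑ k, γ k * o k ^ (2 : ℕ)) ≥ ∑ k, γ k * (1 - o k) ^ 2) ∧
    (∑ k, (-(γ k * (1 - o k))) *
        ((γ k * o k ^ (-η) / ∑ l, γ l * o l ^ (-η)) / γ k - o k) ≤
      -2 * ((1 / 2) * ∑ k, γ k * (1 - o k) ^ 2)) :=
  visit_control_tilt_lyapunov_general K γ hγsum hγ η hη o ho
end

section
/- Let γ be a probability vector on {1,...,K} with all γ_k > 0, let x_k = Z*_k/Z_k > 0, and define V(x) = −Σ_k γ_k log( (γ_k x_k / Σ_ℓ γ_ℓ x_ℓ) / γ_k ). Along the flow Z'_k = (Σ_ℓ γ_ℓ x_ℓ^{−η/(η+1)} / Σ_ℓ γ_ℓ x_ℓ^{1/(η+1)}) Z*_k − Z_k (with η ≥ 0 fixed), one has dV/dt = −Σ_k γ_k (x_k/Σ_ℓγ_ℓx_ℓ − 1)·((Σ_ℓ γ_ℓ x_ℓ^{−η/(η+1)}/Σ_ℓ γ_ℓ x_ℓ^{1/(η+1)}) x_k − 1) ≤ 0, with equality if and only if all x_k are equal. Moreover for η = 0 this derivative equals −Σ_k γ_k (x_k/Σ_ℓγ_ℓx_ℓ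 − 1)². -/
open Finset

/-- Relative entropy V(x) = D_KL(γ ‖ r) with r_k ∝ γ_k x_k. -/
noncomputable def relEnt (K : ℕ) (γ x : Fin K → ℝ) : ℝ :=
  -∑ k, γ k * Real.log ((γ k * x k / ∑ l, γ l * x l) / γ k)

/-- The visit-control factor T(x) = E_γ[x^{-η/(η+1)}] / E_γ[x^{1/(η+1)}]. -/
noncomputable def vcFactor (K : ℕ) (γ x : Fin K → ℝ) (η : ℝ) : ℝ :=
  (∑ l, γ l * x l ^ (-η / (η + 1))) / (∑ l, γ l * x l ^ (1 / (η + 1)))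

/-- The claimed value of dV/dt along the visit-controlled flow. -/
noncomputable def vcDeriv (K : ℕ) (γ x : Fin K → ℝ) (η : ℝ) : ℝ :=
  -∑ k, γ k * (x k / (∑ l, γ l * x l) - 1) * (vcFactor K γ x η * x k - 1)

/-!
Since `∑ γ = 1`, `V = log S - ∑ γₖ log xₖ` with `S = ∑ γₗ xₗ`, and along the flow the ratios
`x = Z*/Z` satisfy `xₖ'/xₖ = -(T xₖ - 1)`; differentiating gives the stated `dV/dt`. Expanding,
`∑ γₖ (xₖ/S - 1)(T xₖ - 1) = (T/S) ∑ γₖ (xₖ - S)²` is a `γ`-variance times the positive factor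
`T/S`, so `dV/dt ≤ 0`, with equality exactly when `x` is constant. At `η = 0`, `T = 1/S`.
-/

section WeightedSums

variable {ι : Type*} [Fintype ι] {γ : ι → ℝ}

lemma univ_nonempty_of_sum_eq_one (hγsum : ∑ k, γ k = 1) : (univ : Finset ι).Nonempty :=
  nonempty_of_sum_ne_zero (f := γ) (by rw [hγsum]; exact one_ne_zero)

lemma sum_mul_pos_of_sum_eq_one (hγsum : ∑ k, γ k = 1) (hγ : ∀ k, 0 < γ k) {x : ι → ℝ}
    (hx : ∀ k, 0 < x k) : 0 < ∑ l, γ l * x l :=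
  sum_pos (fun l _ => mul_pos (hγ l) (hx l)) (univ_nonempty_of_sum_eq_one hγsum)

lemma sum_mul_div_sub_one_mul_sub_one (hγsum : ∑ k, γ k = 1) (x : ι → ℝ) (c : ℝ)
    (hS : ∑ l, γ l * x l ≠ 0) :
    ∑ k, γ k * (x k / ∑ l, γ l * x l - 1) * (c * x k - 1) =
      c / (∑ l, γ l * x l) * ∑ k, γ k * (x k - ∑ l, γ l * x l) ^ 2 := by
  set S := ∑ l, γ l * x l with hS_def
  have expand : ∀ k, γ k * (x k / S - 1) * (c * x k - 1) - c / S * (γ k * (x k - S) ^ 2) =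
      (c - 1 / S) * (γ k * x k) + (1 - c * S) * γ k := by
    intro k; field_simp; ring
  rw [← sub_eq_zero, mul_sum, ← sum_sub_distrib, sum_congr rfl fun k _ => expand k,
    sum_add_distrib, ← mul_sum, ← mul_sum, ← hS_def, hγsum]
  field_simp
  ring

lemma sum_mul_sq_sub_sum_mul_eq_zero_iff (hγsum : ∑ k, γ k = 1) (hγ : ∀ k, 0 < γ k)
    (x : ι → ℝ) :
    ∑ k, γ k * (x k - ∑ l, γ l * x l) ^ 2 = 0 ↔ ∀ k l, x k = x l := by
  rw [sum_eq_zero_iff_of_nonneg fun k _ => mul_nonneg (hγ k).le (sq_nonneg _)]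
  simp only [mem_univ, true_implies, mul_eq_zero, (hγ _).ne', false_or, sq_eq_zero_iff,
    sub_eq_zero]
  refine ⟨fun h k l => (h k).trans (h l).symm, fun h k => ?_⟩
  rw [sum_congr rfl fun l _ => by rw [h l k], ← sum_mul, hγsum, one_mul]

lemma hasDerivAt_log_sum_mul_sub_sum_mul_log (x : ℝ → ι → ℝ) (u : ι → ℝ) {t : ℝ}
    (hx : ∀ k, HasDerivAt (fun s => x s k) (-(x t k * u k)) t) (hpos : ∀ k, x t k ≠ 0)
    (hS : ∑ l, γ l * x t l ≠ 0) :
    HasDerivAt (fun s => Real.log (∑ l, γ l * x s l) - ∑ k, γ k * Real.log (x s k))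
      (-∑ k, γ k * (x t k / ∑ l, γ l * x t l - 1) * u k) t := by
  have hsum := HasDerivAt.fun_sum (u := univ) fun l _ => (hx l).const_mul (γ l)
  have hlogs := HasDerivAt.fun_sum (u := univ) fun k _ => ((hx k).log (hpos k)).const_mul (γ k)
  refine ((hsum.log hS).sub hlogs).congr_deriv ?_
  rw [sum_div, ← sum_sub_distrib, ← sum_neg_distrib]
  refine sum_congr rfl fun k _ => ?_
  field_simp [hpos k]
  ring

end WeightedSums

section VisitControl

variable {K : ℕ} {γ x : Fin K → ℝ}

lemma relEnt_eq_log_sum_sub_sum_log (hγsum : ∑ k, γ k = 1) (hγ : ∀ k, 0 < γ k)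
    (hx : ∀ k, 0 < x k) :
    relEnt K γ x = Real.log (∑ l, γ l * x l) - ∑ k, γ k * Real.log (x k) := by
  have hS := sum_mul_pos_of_sum_eq_one hγsum hγ hx
  have term : ∀ k, γ k * Real.log ((γ k * x k / ∑ l, γ l * x l) / γ k) =
      γ k * Real.log (x k) - γ k * Real.log (∑ l, γ l * x l) := by
    intro k
    rw [mul_div_assoc, mul_div_cancel_left₀ _ (hγ k).ne',
      Real.log_div (hx k).ne' hS.ne', mul_sub]
  simp only [relEnt, term, sum_sub_distrib, ← sum_mul, hγsum, one_mul, neg_sub]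

lemma vcFactor_pos (hγsum : ∑ k, γ k = 1) (hγ : ∀ k, 0 < γ k) (hx : ∀ k, 0 < x k) (η : ℝ) :
    0 < vcFactor K γ x η :=
  div_pos (sum_mul_pos_of_sum_eq_one hγsum hγ fun l => Real.rpow_pos_of_pos (hx l) _)
    (sum_mul_pos_of_sum_eq_one hγsum hγ fun l => Real.rpow_pos_of_pos (hx l) _)

lemma vcFactor_zero (hγsum : ∑ k, γ k = 1) : vcFactor K γ x 0 = 1 / ∑ l, γ l * x l := by
  simp [vcFactor, hγsum]

lemma vcDeriv_eq_neg_mul_sum_sq (hγsum : ∑ k, γ k = 1) (η : ℝ) (hS : ∑ l, γ l * x l ≠ 0) :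
    vcDeriv K γ x η =
      -(vcFactor K γ x η / (∑ l, γ l * x l) * ∑ k, γ k * (x k - ∑ l, γ l * x l) ^ 2) := by
  rw [vcDeriv, sum_mul_div_sub_one_mul_sub_one hγsum x _ hS]

lemma vcDeriv_nonpos (hγsum : ∑ k, γ k = 1) (hγ : ∀ k, 0 < γ k) (hx : ∀ k, 0 < x k)
    (η : ℝ) : vcDeriv K γ x η ≤ 0 := by
  have hS := sum_mul_pos_of_sum_eq_one hγsum hγ hx
  rw [vcDeriv_eq_neg_mul_sum_sq hγsum η hS.ne', neg_nonpos]
  exact mul_nonneg (div_pos (vcFactor_pos hγsum hγ hx η) hS).le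
    (sum_nonneg fun k _ => mul_nonneg (hγ k).le (sq_nonneg _))

lemma vcDeriv_eq_zero_iff (hγsum : ∑ k, γ k = 1) (hγ : ∀ k, 0 < γ k) (hx : ∀ k, 0 < x k)
    (η : ℝ) : vcDeriv K γ x η = 0 ↔ ∀ k l, x k = x l := by
  have hS := sum_mul_pos_of_sum_eq_one hγsum hγ hx
  rw [vcDeriv_eq_neg_mul_sum_sq hγsum η hS.ne', neg_eq_zero,
    mul_eq_zero_iff_left (div_pos (vcFactor_pos hγsum hγ hx η) hS).ne',
    sum_mul_sq_sub_sum_mul_eq_zero_iff hγsum hγ]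

lemma vcDeriv_zero (hγsum : ∑ k, γ k = 1) :
    vcDeriv K γ x 0 = -∑ k, γ k * (x k / (∑ l, γ l * x l) - 1) ^ 2 := by
  simp only [vcDeriv, vcFactor_zero hγsum, one_div, inv_mul_eq_div, sq, mul_assoc]

lemma hasDerivAt_relEnt_of_flow (hγsum : ∑ k, γ k = 1) (hγ : ∀ k, 0 < γ k) {η : ℝ}
    {Zstar : Fin K → ℝ} (hZstar : ∀ k, 0 < Zstar k) {Z : ℝ → Fin K → ℝ}
    (hZpos : ∀ t k, 0 < Z t k)
    (hflow : ∀ t k, HasDerivAt (fun s => Z s k)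
      (vcFactor K γ (fun j => Zstar j / Z t j) η * Zstar k - Z t k) t) (t : ℝ) :
    HasDerivAt (fun s => relEnt K γ (fun j => Zstar j / Z s j))
      (vcDeriv K γ (fun j => Zstar j / Z t j) η) t := by
  set x : ℝ → Fin K → ℝ := fun s j => Zstar j / Z s j
  have hx : ∀ s k, 0 < x s k := fun s k => div_pos (hZstar k) (hZpos s k)
  set T := vcFactor K γ (x t) η
  have hratio : ∀ k, HasDerivAt (fun s => x s k) (-(x t k * (T * x t k - 1))) t := by
    intro k
    refine (((hflow t k).inv (hZpos t k).ne').const_mul (Zstar k)).congr_deriv ?_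
    have hZ := (hZpos t k).ne'
    simp only [x]
    field_simp [hZ]
    ring
  have hV : (fun s => relEnt K γ (x s)) =
      fun s => Real.log (∑ l, γ l * x s l) - ∑ k, γ k * Real.log (x s k) :=
    funext fun s => relEnt_eq_log_sum_sub_sum_log hγsum hγ (hx s)
  rw [hV]
  exact hasDerivAt_log_sum_mul_sub_sum_mul_log x _ hratio (fun k => (hx t k).ne')
    (sum_mul_pos_of_sum_eq_one hγsum hγ (hx t)).ne'

end VisitControl

theorem lyapunov_decrease_under_visit_control_general (K : ℕ)
    (γ : Fin K → ℝ) (hγsum : ∑ k, γ k = 1) (hγ : ∀ k, 0 < γ k)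
    (η : ℝ)
    (Zstar : Fin K → ℝ) (hZstar : ∀ k, 0 < Zstar k)
    (Z : ℝ → Fin K → ℝ) (hZpos : ∀ t k, 0 < Z t k)
    (hflow : ∀ t k, HasDerivAt (fun s => Z s k)
      (vcFactor K γ (fun j => Zstar j / Z t j) η * Zstar k - Z t k) t) :
    (∀ t : ℝ, HasDerivAt (fun s => relEnt K γ (fun j => Zstar j / Z s j))
      (vcDeriv K γ (fun j => Zstar j / Z t j) η) t) ∧
    (∀ t : ℝ, vcDeriv K γ (fun j => Zstar j / Z t j) η ≤ 0) ∧
    (∀ t : ℝ, vcDeriv K γ (fun j => Zstar j / Z t j) η = 0 ↔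
      ∀ k l, Zstar k / Z t k = Zstar l / Z t l) ∧
    (η = 0 → ∀ t : ℝ, vcDeriv K γ (fun j => Zstar j / Z t j) η =
      -∑ k, γ k *
        (Zstar k / Z t k / (∑ l, γ l * (Zstar l / Z t l)) - 1) ^ 2) := by
  have hx : ∀ t k, 0 < Zstar k / Z t k := fun t k => div_pos (hZstar k) (hZpos t k)
  refine ⟨hasDerivAt_relEnt_of_flow hγsum hγ hZstar hZpos hflow,
    fun t => vcDeriv_nonpos hγsum hγ (hx t) η,
    fun t => vcDeriv_eq_zero_iff hγsum hγ (hx t) η, ?_⟩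
  rintro rfl t
  exact vcDeriv_zero hγsum

theorem lyapunov_decrease_under_visit_control (K : ℕ) (hK : 1 ≤ K)
    (γ : Fin K → ℝ) (hγsum : ∑ k, γ k = 1) (hγ : ∀ k, 0 < γ k)
    (η : ℝ) (hη : 0 ≤ η)
    (Zstar : Fin K → ℝ) (hZstar : ∀ k, 0 < Zstar k)
    (Z : ℝ → Fin K → ℝ) (hZpos : ∀ t k, 0 < Z t k)
    (hflow : ∀ t k, HasDerivAt (fun s => Z s k)
      (vcFactor K γ (fun j => Zstar j / Z t j) η * Zstar k - Z t k) t) :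
    (∀ t : ℝ, HasDerivAt (fun s => relEnt K γ (fun j => Zstar j / Z s j))
      (vcDeriv K γ (fun j => Zstar j / Z t j) η) t) ∧
    (∀ t : ℝ, vcDeriv K γ (fun j => Zstar j / Z t j) η ≤ 0) ∧
    (∀ t : ℝ, vcDeriv K γ (fun j => Zstar j / Z t j) η = 0 ↔
      ∀ k l, Zstar k / Z t k = Zstar l / Z t l) ∧
    (η = 0 → ∀ t : ℝ, vcDeriv K γ (fun j => Zstar j / Z t j) η =
      -∑ k, γ k *
        (Zstar k / Z t k / (∑ l, γ l * (Zstar l / Z t l)) - 1) ^ 2) :=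
  lyapunov_decrease_under_visit_control_general K γ hγsum hγ η Zstar hZstar Z hZpos hflow
end

section
/- Let γ₁ = γ₂ = 1/2, and consider the recursion Δ^{t+1} = Δ^t + (1/(t+1)) G(X^{t+1}; Δ^t) where, conditionally on Δ^t, X^{t+1} takes the value a = 1/γ₁ with probability (1−2δ)·1/(1+e^{Δ^t}), the value b = (1−e^{Δ^t})/(γ₁+γ₂e^{Δ^t}) with probability 2δ, and the value c = −1/γ₂ with probability (1−2δ)·e^{Δ^t}/(1+e^{Δ^t}). Then the conditional expectation of the increment satisfies E[Δ^{t+1} − Δ^t | Δ^t] = (1/(t+1)) · (1 − e^{Δ^t})/((1 + e^{Δ^t})/2), which is strictly negative when Δ^t > 0 and strictly positive when Δ^t < 0. -/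
theorem self_adjustment_drift (δ : ℝ) (hδ : δ ∈ Set.Ioo (0 : ℝ) (1 / 2))
    (Δ : ℝ) (t : ℕ) :
    ((1 : ℝ) / (t + 1)) *
        ((1 - 2 * δ) * (1 / (1 + Real.exp Δ)) * (1 / (1 / 2 : ℝ)) +
          2 * δ * ((1 - Real.exp Δ) / (1 / 2 + 1 / 2 * Real.exp Δ)) +
          (1 - 2 * δ) * (Real.exp Δ / (1 + Real.exp Δ)) * (-(1 / (1 / 2 : ℝ)))) =
      ((1 : ℝ) / (t + 1)) * ((1 - Real.exp Δ) / ((1 + Real.exp Δ) / 2)) ∧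
    (0 < Δ → ((1 : ℝ) / (t + 1)) * ((1 - Real.exp Δ) / ((1 + Real.exp Δ) / 2)) < 0) ∧
    (Δ < 0 → 0 < ((1 : ℝ) / (t + 1)) * ((1 - Real.exp Δ) / ((1 + Real.exp Δ) / 2))) := by
  have he : (0 : ℝ) < Real.exp Δ := Real.exp_pos Δ
  have h1 : (0 : ℝ) < 1 + Real.exp Δ := by linarith
  have ht : (0 : ℝ) < (t : ℝ) + 1 := by positivity
  refine ⟨?_, ?_, ?_⟩
  · field_simp
    ring
  · intro h
    have : (1 : ℝ) < Real.exp Δ := by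
      exact Real.one_lt_exp_iff.mpr h
    have hnum : (1 - Real.exp Δ) / ((1 + Real.exp Δ) / 2) < 0 :=
      div_neg_of_neg_of_pos (by linarith) (by linarith)
    exact mul_neg_of_pos_of_neg (by positivity) hnum
  · intro h
    have : Real.exp Δ < 1 := Real.exp_lt_one_iff.mpr h
    have hnum : 0 < (1 - Real.exp Δ) / ((1 + Real.exp Δ) / 2) :=
      div_pos (by linarith) (by linarith)
    exact mul_pos (by positivity) hnum
end
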